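/- arXiv:2107.12361 — 2 statements merged into one kernel-verified Lean document; each statement's English description precedes it below -/
import Mathlib

section
/- Global convergence of Gauss–Newton with quadratic regularisation (Theorem A.2): assume (A1)–(A3). Let 0 < η₁ ≤ η₂ < 1 and γ₀ > 0, and suppose sequences (v_k) in ℝ^n, (γ_k) with γ_k > 0, and (s_k) satisfy, for every k: (i) (J(v_k)ᵀJ(v_k) + γ_k I) s_k = −J(v_k)ᵀ r(v_k); (ii) with m_k(s) = (1/2)‖J(v_k)s + r(v_k)‖² + (γ_k/2)‖s‖² and ρ_k = (𝒥(v_k) − 𝒥(v_k + s_k)) / (𝒥(v_k) − m_k(s_k)), the updates are v_{k+1} = v_k + s_k if ρ_k ≥ η₁ and v_{k+1} = v_k otherwise; (iii) γ_{k+1} = γ_k/2 if ρ_k ≥ η₂, γ_{k+1} = γ_k if η₁ ≤ ρ_k < η₂, and γ_{k+1} = 2γ_k if ρ_k < η₁. Then ∇𝒥(v_k) = J(v_k)ᵀ r(v_k) → 0 as k → ∞. -/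
open scoped RealInnerProductSpace

/-- The nonlinear least-squares objective `𝒥(v) = (1/2)‖r(v)‖²`. -/
noncomputable def nlsObj {n m : ℕ} (r : EuclideanSpace ℝ (Fin n) → EuclideanSpace ℝ (Fin m))
    (v : EuclideanSpace ℝ (Fin n)) : ℝ :=
  (1 / 2) * ‖r v‖ ^ 2

/-- The Jacobian `J(v)` of `r` at `v`, as a continuous linear map. -/
noncomputable def nlsJ {n m : ℕ} (r : EuclideanSpace ℝ (Fin n) → EuclideanSpace ℝ (Fin m))
    (v : EuclideanSpace ℝ (Fin n)) :
    EuclideanSpace ℝ (Fin n) →L[ℝ] EuclideanSpace ℝ (Fin m) :=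
  fderiv ℝ r v

/-- The gradient `∇𝒥(v) = J(v)ᵀ r(v)`. -/
noncomputable def nlsGrad {n m : ℕ} (r : EuclideanSpace ℝ (Fin n) → EuclideanSpace ℝ (Fin m))
    (v : EuclideanSpace ℝ (Fin n)) : EuclideanSpace ℝ (Fin n) :=
  ContinuousLinearMap.adjoint (nlsJ r v) (r v)

/-!
The normal equations make the predicted decrease `𝒥(v) - m(s) = ½‖J s‖² + (γ/2)‖s‖²`, while
(A1) and (A3) bound the model error `𝒥(v + s) - m(s)` by `ω L_J ‖s‖²`. Hence every step with
`γ ≥ 2 ω L_J / (1 - η₂)` is very successful, so `γ_k` stays bounded and every run of unsuccessful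
steps is finite. On a successful step `𝒥` drops by at least `η₁` times the predicted decrease,
which dominates `‖∇𝒥‖² / (4 (L_r² + sup γ))`. Since `𝒥(v_k)` is monotone and bounded below its
decrements tend to zero, and an unsuccessful step leaves the iterate, hence the gradient, unchanged
until the next successful one. At a stationary iterate the step vanishes and the iteration stalls.
-/

open Filter Topology
open scoped InnerProduct

theorem sq_norm_sub_sq_norm_le {F : Type*} [SeminormedAddCommGroup F] {a b : F} {ω : ℝ}
    (ha : ‖a‖ ≤ ω) (hb : ‖b‖ ≤ ω) :
    ‖a‖ ^ 2 - ‖b‖ ^ 2 ≤ 2 * ω * ‖a - b‖ :=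
  calc ‖a‖ ^ 2 - ‖b‖ ^ 2 = (‖a‖ - ‖b‖) * (‖a‖ + ‖b‖) := by ring
    _ ≤ ‖a - b‖ * (2 * ω) := by
        gcongr
        · exact norm_sub_norm_le a b
        · linarith
    _ = 2 * ω * ‖a - b‖ := by ring

section MeanValue

variable {E F : Type*} [NormedAddCommGroup E] [NormedSpace ℝ E] [NormedAddCommGroup F]
  [NormedSpace ℝ F]

theorem norm_sub_sub_fderiv_apply_le {f : E → F} (hf : Differentiable ℝ f) {L : ℝ} (hL : 0 ≤ L)
    (hlip : ∀ x y, ‖fderiv ℝ f x - fderiv ℝ f y‖ ≤ L * ‖x - y‖) (x y : E) :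
    ‖f y - f x - fderiv ℝ f x (y - x)‖ ≤ L * ‖y - x‖ ^ 2 := by
  have bound : ∀ z ∈ Metric.closedBall x ‖y - x‖,
      ‖fderiv ℝ f z - fderiv ℝ f x‖ ≤ L * ‖y - x‖ := fun z hz =>
    (hlip z x).trans (mul_le_mul_of_nonneg_left (mem_closedBall_iff_norm.1 hz) hL)
  calc _ ≤ L * ‖y - x‖ * ‖y - x‖ :=
        (convex_closedBall x _).norm_image_sub_le_of_norm_fderiv_le' (fun z _ => hf z) bound
          (Metric.mem_closedBall_self (norm_nonneg _)) (mem_closedBall_iff_norm.2 le_rfl)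
    _ = L * ‖y - x‖ ^ 2 := by ring

end MeanValue

section RegularisedNormalEquation

variable {E F : Type*} [NormedAddCommGroup E] [InnerProductSpace ℝ E] [CompleteSpace E]
  [NormedAddCommGroup F] [InnerProductSpace ℝ F] [CompleteSpace F]

/-- The regularised Gauss–Newton model: `gnModel (nlsJ r v) (r v) γ s` is the paper's `m_k(s)`. -/
noncomputable def gnModel (J : E →L[ℝ] F) (b : F) (γ : ℝ) (s : E) : ℝ :=
  1 / 2 * ‖J s + b‖ ^ 2 + γ / 2 * ‖s‖ ^ 2

variable {J : E →L[ℝ] F} {b : F} {γ : ℝ} {s : E}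

theorem inner_apply_eq_of_normal_eq (h : (J†) (J s) + γ • s = -(J†) b) :
    ⟪J s, b⟫ = -(‖J s‖ ^ 2 + γ * ‖s‖ ^ 2) := by
  rw [← ContinuousLinearMap.adjoint_inner_right, ← neg_neg ((J†) b), ← h]
  simp only [inner_neg_right, inner_add_right, real_inner_smul_right,
    ContinuousLinearMap.adjoint_inner_right, real_inner_self_eq_norm_sq]

theorem half_sq_norm_sub_gnModel (h : (J†) (J s) + γ • s = -(J†) b) :
    1 / 2 * ‖b‖ ^ 2 - gnModel J b γ s = 1 / 2 * ‖J s‖ ^ 2 + γ / 2 * ‖s‖ ^ 2 := by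
  rw [gnModel, norm_add_sq_real, inner_apply_eq_of_normal_eq h]
  ring

theorem norm_apply_add_le_of_normal_eq (h : (J†) (J s) + γ • s = -(J†) b) (hγ : 0 ≤ γ) :
    ‖J s + b‖ ≤ ‖b‖ := by
  have hdecr := half_sq_norm_sub_gnModel h
  rw [gnModel] at hdecr
  refine (pow_le_pow_iff_left₀ (norm_nonneg _) (norm_nonneg _) two_ne_zero).1 ?_
  nlinarith [sq_nonneg ‖J s‖, mul_nonneg hγ (sq_nonneg ‖s‖)]

theorem eq_zero_of_normal_eq (h : (J†) (J s) + γ • s = -(J†) b) (hγ : 0 < γ) (hb : (J†) b = 0) :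
    s = 0 := by
  have hinner := inner_apply_eq_of_normal_eq h
  rw [← ContinuousLinearMap.adjoint_inner_right, hb, inner_zero_right] at hinner
  have : γ * ‖s‖ ^ 2 = 0 := by nlinarith [sq_nonneg ‖J s‖, mul_nonneg hγ.le (sq_nonneg ‖s‖)]
  simpa [hγ.ne'] using this

theorem adjoint_apply_eq_zero_of_normal_eq (h : (J†) (J s) + γ • s = -(J†) b) (hs : s = 0) :
    (J†) b = 0 := by
  subst hs
  simpa using h.symm

theorem sq_norm_adjoint_apply_le (h : (J†) (J s) + γ • s = -(J†) b) {L Γ : ℝ} (hJ : ‖J‖ ≤ L)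
    (hγ : 0 ≤ γ) (hγΓ : γ ≤ Γ) :
    ‖(J†) b‖ ^ 2 ≤ 4 * (L ^ 2 + Γ) * (1 / 2 * ‖J s‖ ^ 2 + γ / 2 * ‖s‖ ^ 2) := by
  have hnorm : ‖(J†) b‖ ≤ L * ‖J s‖ + γ * ‖s‖ :=
    calc ‖(J†) b‖ = ‖(J†) (J s) + γ • s‖ := by rw [h, norm_neg]
      _ ≤ ‖(J†) (J s)‖ + ‖γ • s‖ := norm_add_le _ _
      _ ≤ L * ‖J s‖ + γ * ‖s‖ := by
          rw [norm_smul_of_nonneg hγ]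
          gcongr
          exact (J†).le_of_opNorm_le (by rwa [ContinuousLinearMap.adjoint.norm_map]) _
  have hL : 0 ≤ L := (norm_nonneg J).trans hJ
  have hsq := pow_le_pow_left₀ (norm_nonneg _) hnorm 2
  nlinarith [sq_nonneg (L * ‖J s‖ - γ * ‖s‖),
    mul_nonneg (sub_nonneg.2 hγΓ) (mul_nonneg hγ (sq_nonneg ‖s‖)),
    mul_nonneg (mul_nonneg (sq_nonneg L) hγ) (sq_nonneg ‖s‖),
    mul_nonneg (hγ.trans hγΓ) (sq_nonneg ‖J s‖)]

end RegularisedNormalEquation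

section NonlinearLeastSquares

variable {n m : ℕ} {r : EuclideanSpace ℝ (Fin n) → EuclideanSpace ℝ (Fin m)}

theorem norm_nlsJ_le {Lr : ℝ} (hLr : 0 ≤ Lr) (hA2 : ∀ v w, ‖r v - r w‖ ≤ Lr * ‖v - w‖)
    (v : EuclideanSpace ℝ (Fin n)) : ‖nlsJ r v‖ ≤ Lr :=
  norm_fderiv_le_of_lip' ℝ hLr (Eventually.of_forall fun w => hA2 w v)

variable {ω LJ γ : ℝ} {v s : EuclideanSpace ℝ (Fin n)}

theorem nlsObj_add_sub_gnModel_le (hr : Differentiable ℝ r) (hA1 : ∀ v, ‖r v‖ ≤ ω)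
    (hLJ : 0 ≤ LJ) (hA3 : ∀ v w, ‖nlsJ r v - nlsJ r w‖ ≤ LJ * ‖v - w‖) (hγ : 0 ≤ γ)
    (h : (nlsJ r v†) (nlsJ r v s) + γ • s = -(nlsJ r v†) (r v)) :
    nlsObj r (v + s) - gnModel (nlsJ r v) (r v) γ s ≤ ω * LJ * ‖s‖ ^ 2 := by
  have hω : 0 ≤ ω := (norm_nonneg _).trans (hA1 v)
  have htaylor : ‖r (v + s) - (nlsJ r v s + r v)‖ ≤ LJ * ‖s‖ ^ 2 := by
    simpa [sub_sub, add_comm, nlsJ] using norm_sub_sub_fderiv_apply_le hr hLJ hA3 v (v + s)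
  have hsq := sq_norm_sub_sq_norm_le (hA1 (v + s))
    ((norm_apply_add_le_of_normal_eq h hγ).trans (hA1 v))
  rw [nlsObj, gnModel]
  nlinarith [mul_le_mul_of_nonneg_left htaylor hω, mul_nonneg hγ (sq_nonneg ‖s‖)]

theorem le_div_nlsObj_sub_gnModel (hr : Differentiable ℝ r) (hA1 : ∀ v, ‖r v‖ ≤ ω)
    (hLJ : 0 ≤ LJ) (hA3 : ∀ v w, ‖nlsJ r v - nlsJ r w‖ ≤ LJ * ‖v - w‖) (hγ : 0 < γ)
    (h : (nlsJ r v†) (nlsJ r v s) + γ • s = -(nlsJ r v†) (r v)) (hs : s ≠ 0) {η : ℝ}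
    (hη : 2 * ω * LJ ≤ (1 - η) * γ) :
    η ≤ (nlsObj r v - nlsObj r (v + s)) / (nlsObj r v - gnModel (nlsJ r v) (r v) γ s) := by
  have hdecr := half_sq_norm_sub_gnModel h
  have hgap := nlsObj_add_sub_gnModel_le hr hA1 hLJ hA3 hγ.le h
  have hs2 : 0 < ‖s‖ ^ 2 := by positivity
  have hω : 0 ≤ ω := (norm_nonneg _).trans (hA1 v)
  have hη1 : 0 ≤ 1 - η := nonneg_of_mul_nonneg_left ((by positivity : 0 ≤ 2 * ω * LJ).trans hη) hγ
  unfold nlsObj at hgap ⊢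
  rw [le_div_iff₀ (by nlinarith [sq_nonneg ‖nlsJ r v s‖])]
  nlinarith [mul_le_mul_of_nonneg_right hη hs2.le, mul_nonneg hη1 (sq_nonneg ‖nlsJ r v s‖)]

theorem sq_norm_nlsGrad_le {Lr Γ η : ℝ} (hJ : ‖nlsJ r v‖ ≤ Lr) (hγ : 0 < γ) (hγΓ : γ ≤ Γ)
    (h : (nlsJ r v†) (nlsJ r v s) + γ • s = -(nlsJ r v†) (r v)) (hs : s ≠ 0) (hη : 0 < η)
    (hρ : η ≤ (nlsObj r v - nlsObj r (v + s)) / (nlsObj r v - gnModel (nlsJ r v) (r v) γ s)) :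
    ‖nlsGrad r v‖ ^ 2 ≤ 4 * (Lr ^ 2 + Γ) / η * (nlsObj r v - nlsObj r (v + s)) := by
  have hdecr := half_sq_norm_sub_gnModel h
  have hpred : 0 < nlsObj r v - gnModel (nlsJ r v) (r v) γ s := by
    rw [nlsObj, hdecr]
    have : 0 < ‖s‖ ^ 2 := by positivity
    nlinarith [sq_nonneg ‖nlsJ r v s‖]
  rw [le_div_iff₀ hpred] at hρ
  rw [div_mul_eq_mul_div, le_div_iff₀ hη]
  have hC : 0 ≤ 4 * (Lr ^ 2 + Γ) := by nlinarith [sq_nonneg Lr]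
  calc ‖nlsGrad r v‖ ^ 2 * η
      ≤ 4 * (Lr ^ 2 + Γ) * (nlsObj r v - gnModel (nlsJ r v) (r v) γ s) * η := by
        rw [nlsObj, hdecr]
        gcongr
        exact sq_norm_adjoint_apply_le h hJ hγ.le hγΓ
    _ ≤ 4 * (Lr ^ 2 + Γ) * (nlsObj r v - nlsObj r (v + s)) := by
        rw [mul_assoc]
        gcongr
        linarith

end NonlinearLeastSquares

theorem tendsto_zero_of_le_mul_sub_succ {a u : ℕ → ℝ} (ha : Antitone a)
    (hbdd : BddBelow (Set.range a)) (hu : ∀ k, 0 ≤ u k) {C : ℝ}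
    (hle : ∀ k, ∃ j, k ≤ j ∧ u k ≤ C * (a j - a (j + 1))) : Tendsto u atTop (𝓝 0) := by
  choose φ hφ hφle using hle
  have hdiff : Tendsto (fun j => C * (a j - a (j + 1))) atTop (𝓝 0) := by
    have hlim := tendsto_atTop_ciInf ha hbdd
    simpa using (hlim.sub (hlim.comp (tendsto_add_atTop_nat 1))).const_mul C
  exact squeeze_zero hu hφle (hdiff.comp (tendsto_atTop_mono hφ tendsto_id))

section TrustRegion

variable {X : Type*} {v : ℕ → X} {ρ γ : ℕ → ℝ} {η₁ η₂ : ℝ}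

theorem eq_of_le_of_succ_eq {P : X → Prop} (hfix : ∀ k, P (v k) → v (k + 1) = v k) {K : ℕ}
    (hK : P (v K)) : ∀ k, K ≤ k → v k = v K := by
  intro k hk
  induction k, hk using Nat.le_induction with
  | base => rfl
  | succ k _ ih => rw [hfix k (ih ▸ hK), ih]

theorem le_max_of_threshold (hγpos : ∀ k, 0 < γ k) (hη₁₂ : η₁ ≤ η₂)
    (hγvs : ∀ k, η₂ ≤ ρ k → γ (k + 1) = γ k / 2)
    (hγs : ∀ k, η₁ ≤ ρ k → ρ k < η₂ → γ (k + 1) = γ k)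
    (hγu : ∀ k, ρ k < η₁ → γ (k + 1) = 2 * γ k) {Γ : ℝ} (hΓ : ∀ k, Γ ≤ γ k → η₂ ≤ ρ k) :
    ∀ k, γ k ≤ max (γ 0) (2 * Γ) := by
  intro k
  induction k with
  | zero => exact le_max_left _ _
  | succ k ih =>
    rcases lt_or_ge (ρ k) η₁ with hfail | hsucc
    · have : γ k < Γ := lt_of_not_ge fun hk => (hΓ k hk).not_gt (hfail.trans_le hη₁₂)
      rw [hγu k hfail]
      exact (by linarith : 2 * γ k ≤ 2 * Γ).trans (le_max_right _ _)
    · rcases lt_or_ge (ρ k) η₂ with hmid | hvery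
      · rwa [hγs k hsucc hmid]
      · rw [hγvs k hvery]
        linarith [hγpos k]

theorem exists_ge_le_of_bddAbove (hγpos : ∀ k, 0 < γ k)
    (hγu : ∀ k, ρ k < η₁ → γ (k + 1) = 2 * γ k) {B : ℝ} (hB : ∀ k, γ k ≤ B) (k : ℕ) :
    ∃ j, k ≤ j ∧ η₁ ≤ ρ j := by
  by_contra! hfail
  have hgrow : ∀ i, γ (k + i) = 2 ^ i * γ k := by
    intro i
    induction i with
    | zero => simp
    | succ i ih => rw [← add_assoc, hγu _ (hfail _ (Nat.le_add_right k i)), ih, pow_succ]; ring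
  obtain ⟨i, hi⟩ := pow_unbounded_of_one_lt (B / γ k) one_lt_two
  rw [div_lt_iff₀ (hγpos k), ← hgrow i] at hi
  exact (hB (k + i)).not_gt hi

theorem exists_ge_le_and_eq (hvfail : ∀ k, ρ k < η₁ → v (k + 1) = v k) {k j₀ : ℕ} (hk : k ≤ j₀)
    (hj₀ : η₁ ≤ ρ j₀) : ∃ j, k ≤ j ∧ η₁ ≤ ρ j ∧ v j = v k := by
  induction hk using Nat.decreasingInduction with
  | self => exact ⟨j₀, le_rfl, hj₀, rfl⟩
  | of_succ k _ ih =>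
    rcases lt_or_ge (ρ k) η₁ with hfail | hsucc
    · obtain ⟨j, hkj, hj, hvj⟩ := ih
      exact ⟨j, k.le_succ.trans hkj, hj, hvj.trans (hvfail k hfail)⟩
    · exact ⟨k, le_rfl, hsucc, rfl⟩

theorem tendsto_of_trust_region {B C : ℝ} {F G : X → ℝ} (hF : ∀ x, 0 ≤ F x) (hG : ∀ x, 0 ≤ G x)
    (hC : 0 < C) (hγpos : ∀ k, 0 < γ k) (hγu : ∀ k, ρ k < η₁ → γ (k + 1) = 2 * γ k)
    (hB : ∀ k, γ k ≤ B) (hvfail : ∀ k, ρ k < η₁ → v (k + 1) = v k)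
    (hdecr : ∀ k, η₁ ≤ ρ k → G (v k) ≤ C * (F (v k) - F (v (k + 1)))) :
    Tendsto (fun k => G (v k)) atTop (𝓝 0) := by
  have hanti : Antitone fun k => F (v k) := antitone_nat_of_succ_le fun k => by
    rcases lt_or_ge (ρ k) η₁ with hfail | hsucc
    · rw [hvfail k hfail]
    · exact sub_nonneg.1 (nonneg_of_mul_nonneg_right ((hG _).trans (hdecr k hsucc)) hC)
  refine tendsto_zero_of_le_mul_sub_succ (C := C) hanti ⟨0, ?_⟩ (fun k => hG _) fun k => ?_
  · rintro _ ⟨k, rfl⟩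
    exact hF _
  · obtain ⟨j₀, hkj₀, hj₀⟩ := exists_ge_le_of_bddAbove hγpos hγu hB k
    obtain ⟨j, hkj, hj, hvj⟩ := exists_ge_le_and_eq hvfail hkj₀ hj₀
    exact ⟨j, hkj, hvj ▸ hdecr j hj⟩

end TrustRegion

theorem gauss_newton_regularisation_global_convergence_general
    {n m : ℕ}
    (r : EuclideanSpace ℝ (Fin n) → EuclideanSpace ℝ (Fin m))
    (hr : ContDiff ℝ 1 r)
    -- (A1)
    (ω : ℝ) (hA1 : ∀ v, ‖r v‖ ≤ ω)
    -- (A2)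
    (Lr : ℝ) (hLr : 0 < Lr) (hA2 : ∀ v w, ‖r v - r w‖ ≤ Lr * ‖v - w‖)
    -- (A3)
    (LJ : ℝ) (hLJ : 0 < LJ) (hA3 : ∀ v w, ‖nlsJ r v - nlsJ r w‖ ≤ LJ * ‖v - w‖)
    -- algorithm parameters: 0 < η₁ ≤ η₂ < 1, γ₀ > 0
    (η₁ η₂ : ℝ) (hη₁ : 0 < η₁) (hη₁₂ : η₁ ≤ η₂) (hη₂ : η₂ < 1)
    -- iterates
    (v s : ℕ → EuclideanSpace ℝ (Fin n)) (γ : ℕ → ℝ)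
    (hγpos : ∀ k, 0 < γ k)
    -- (i) regularised Gauss–Newton step: (J(v_k)ᵀJ(v_k) + γ_k I) s_k = −J(v_k)ᵀ r(v_k)
    (hstep : ∀ k, ContinuousLinearMap.adjoint (nlsJ r (v k)) (nlsJ r (v k) (s k)) + γ k • s k =
      -ContinuousLinearMap.adjoint (nlsJ r (v k)) (r (v k)))
    -- (ii) local model and ratio of achieved to predicted decrease
    (mdl : ℕ → EuclideanSpace ℝ (Fin n) → ℝ)
    (hmdl : ∀ k sv, mdl k sv =
      (1 / 2) * ‖nlsJ r (v k) sv + r (v k)‖ ^ 2 + (γ k / 2) * ‖sv‖ ^ 2)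
    (ρ : ℕ → ℝ)
    (hρ : ∀ k, ρ k = (nlsObj r (v k) - nlsObj r (v k + s k)) /
      (nlsObj r (v k) - mdl k (s k)))
    -- iterate update
    (hvsucc : ∀ k, η₁ ≤ ρ k → v (k + 1) = v k + s k)
    (hvfail : ∀ k, ρ k < η₁ → v (k + 1) = v k)
    -- (iii) regularisation parameter update
    (hγvs : ∀ k, η₂ ≤ ρ k → γ (k + 1) = γ k / 2)
    (hγs : ∀ k, η₁ ≤ ρ k → ρ k < η₂ → γ (k + 1) = γ k)
    (hγu : ∀ k, ρ k < η₁ → γ (k + 1) = 2 * γ k) :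
    Filter.Tendsto (fun k => nlsGrad r (v k)) Filter.atTop (nhds 0) := by
  have hrd : Differentiable ℝ r := hr.differentiable one_ne_zero
  have hρ' : ∀ k, ρ k = (nlsObj r (v k) - nlsObj r (v k + s k)) /
      (nlsObj r (v k) - gnModel (nlsJ r (v k)) (r (v k)) (γ k) (s k)) := fun k => by
    rw [hρ, hmdl]; rfl
  by_cases hstat : ∃ K, nlsGrad r (v K) = 0
  · obtain ⟨K, hK⟩ := hstat
    have hfix : ∀ k, nlsGrad r (v k) = 0 → v (k + 1) = v k := fun k hk => hvfail k <| by
      rwa [hρ' k, eq_zero_of_normal_eq (hstep k) (hγpos k) hk, add_zero, sub_self, zero_div]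
    refine tendsto_const_nhds.congr' (eventually_atTop.2 ⟨K, fun k hk => ?_⟩)
    dsimp only
    rw [eq_of_le_of_succ_eq (P := fun x => nlsGrad r x = 0) hfix hK k hk, hK]
  rw [not_exists] at hstat
  have hs : ∀ k, s k ≠ 0 := fun k hk => hstat k (adjoint_apply_eq_zero_of_normal_eq (hstep k) hk)
  have hthr : ∀ k, 2 * ω * LJ / (1 - η₂) ≤ γ k → η₂ ≤ ρ k := fun k hk => hρ' k ▸
    le_div_nlsObj_sub_gnModel hrd hA1 hLJ.le hA3 (hγpos k) (hstep k) (hs k)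
      (by rw [div_le_iff₀ (by linarith)] at hk; linarith)
  set Γ := max (γ 0) (2 * (2 * ω * LJ / (1 - η₂)))
  have hγΓ : ∀ k, γ k ≤ Γ := le_max_of_threshold hγpos hη₁₂ hγvs hγs hγu hthr
  have hΓ : 0 < Γ := (hγpos 0).trans_le (le_max_left _ _)
  have hsq : Tendsto (fun k => ‖nlsGrad r (v k)‖ ^ 2) atTop (𝓝 0) := by
    refine tendsto_of_trust_region (v := v) (F := nlsObj r) (G := fun x => ‖nlsGrad r x‖ ^ 2)
      (C := 4 * (Lr ^ 2 + Γ) / η₁) (fun _ => by unfold nlsObj; positivity)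
      (fun _ => sq_nonneg _) (by positivity) hγpos hγu hγΓ hvfail fun k hk => ?_
    rw [hvsucc k hk]
    exact sq_norm_nlsGrad_le (norm_nlsJ_le hLr.le hA2 _) (hγpos k) (hγΓ k) (hstep k) (hs k) hη₁
      (hρ' k ▸ hk)
  rw [tendsto_zero_iff_norm_tendsto_zero]
  simpa [Real.sqrt_sq (norm_nonneg _)] using hsq.sqrt

/-- Theorem A.2: global convergence of Gauss–Newton with quadratic regularisation. -/
theorem gauss_newton_regularisation_global_convergence
    {n m : ℕ} (hn : 0 < n) (hm : 0 < m)
    (r : EuclideanSpace ℝ (Fin n) → EuclideanSpace ℝ (Fin m))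
    (hr : ContDiff ℝ 1 r)
    -- (A1)
    (ω : ℝ) (hω : 0 < ω) (hA1 : ∀ v, ‖r v‖ ≤ ω)
    -- (A2)
    (Lr : ℝ) (hLr : 0 < Lr) (hA2 : ∀ v w, ‖r v - r w‖ ≤ Lr * ‖v - w‖)
    -- (A3)
    (LJ : ℝ) (hLJ : 0 < LJ) (hA3 : ∀ v w, ‖nlsJ r v - nlsJ r w‖ ≤ LJ * ‖v - w‖)
    -- algorithm parameters: 0 < η₁ ≤ η₂ < 1, γ₀ > 0
    (η₁ η₂ γ₀ : ℝ) (hη₁ : 0 < η₁) (hη₁₂ : η₁ ≤ η₂) (hη₂ : η₂ < 1) (hγ₀ : 0 < γ₀)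
    -- iterates
    (v s : ℕ → EuclideanSpace ℝ (Fin n)) (γ : ℕ → ℝ)
    (hγpos : ∀ k, 0 < γ k) (hγinit : γ 0 = γ₀)
    -- (i) regularised Gauss–Newton step: (J(v_k)ᵀJ(v_k) + γ_k I) s_k = −J(v_k)ᵀ r(v_k)
    (hstep : ∀ k, ContinuousLinearMap.adjoint (nlsJ r (v k)) (nlsJ r (v k) (s k)) + γ k • s k =
      -ContinuousLinearMap.adjoint (nlsJ r (v k)) (r (v k)))
    -- (ii) local model and ratio of achieved to predicted decrease
    (mdl : ℕ → EuclideanSpace ℝ (Fin n) → ℝ)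
    (hmdl : ∀ k sv, mdl k sv =
      (1 / 2) * ‖nlsJ r (v k) sv + r (v k)‖ ^ 2 + (γ k / 2) * ‖sv‖ ^ 2)
    (ρ : ℕ → ℝ)
    (hρ : ∀ k, ρ k = (nlsObj r (v k) - nlsObj r (v k + s k)) /
      (nlsObj r (v k) - mdl k (s k)))
    -- iterate update
    (hvsucc : ∀ k, η₁ ≤ ρ k → v (k + 1) = v k + s k)
    (hvfail : ∀ k, ρ k < η₁ → v (k + 1) = v k)
    -- (iii) regularisation parameter update
    (hγvs : ∀ k, η₂ ≤ ρ k → γ (k + 1) = γ k / 2)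
    (hγs : ∀ k, η₁ ≤ ρ k → ρ k < η₂ → γ (k + 1) = γ k)
    (hγu : ∀ k, ρ k < η₁ → γ (k + 1) = 2 * γ k) :
    Filter.Tendsto (fun k => nlsGrad r (v k)) Filter.atTop (nhds 0) :=
  gauss_newton_regularisation_global_convergence_general r hr ω hA1 Lr hLr hA2 LJ hLJ hA3 η₁ η₂ hη₁
    hη₁₂ hη₂ v s γ hγpos hstep mdl hmdl ρ hρ hvsucc hvfail hγvs hγs hγu
end

section
/- Sufficiently large regularisation guarantees a very successful iteration: suppose ∇𝒥 is Lipschitz continuous with constant L > 0, fix v ∈ ℝ^n with ∇𝒥(v) ≠ 0, let η₂ ∈ (0,1), and let γ ≥ L/(2 − η₂). Let s solve (J(v)ᵀJ(v) + γI) s = −J(v)ᵀ r(v) and define m(s) = (1/2)‖J(v)s + r(v)‖² + (γ/2)‖s‖². Then 𝒥(v) − m(s) > 0 and the ratio ρ = (𝒥(v) − 𝒥(v + s)) / (𝒥(v) − m(s)) satisfies ρ ≥ η₂. -/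
/-!
Let `g = ∇𝒥(v)`. Pairing the regularised normal equations with `s` gives
`⟪g, s⟫ = -(‖J s‖² + γ‖s‖²)`, and expanding the model turns the predicted decrease into
`½‖J s‖² + ½γ‖s‖²`, positive since `s ≠ 0` when `g ≠ 0`. The descent lemma for the
`L`-Lipschitz gradient bounds the actual decrease below by `‖J s‖² + (γ - L/2)‖s‖²`, and this is
at least `η₂` times the predicted decrease exactly when `γ(2 - η₂) ≥ L`.
-/

open scoped RealInnerProductSpace

section Descent

variable {E : Type*} [NormedAddCommGroup E] [InnerProductSpace ℝ E] [CompleteSpace E]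

theorem HasGradientAt.hasDerivAt_comp_add_smul {f : E → ℝ} {g v s : E} {t : ℝ}
    (hf : HasGradientAt f g (v + t • s)) :
    HasDerivAt (fun t : ℝ => f (v + t • s)) ⟪g, s⟫ t := by
  have hline : HasDerivAt (fun t : ℝ => v + t • s) s t := by
    simpa using ((hasDerivAt_id t).smul_const s).const_add v
  have h := hf.hasFDerivAt.comp_hasDerivAt t hline
  simp only [InnerProductSpace.toDual_apply_apply] at h
  exact h

theorem le_add_inner_add_of_lipschitz_gradient {f : E → ℝ} {g : E → E} {L : ℝ}
    (hf : ∀ x, HasGradientAt f (g x) x) (hg : ∀ x y, ‖g x - g y‖ ≤ L * ‖x - y‖) (v s : E) :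
    f (v + s) ≤ f v + ⟪g v, s⟫ + L / 2 * ‖s‖ ^ 2 := by
  set ψ : ℝ → ℝ := fun t => f (v + t • s) - t * ⟪g v, s⟫ - L / 2 * t ^ 2 * ‖s‖ ^ 2
  have hψ : ∀ t, HasDerivAt ψ (⟪g (v + t • s) - g v, s⟫ - L * t * ‖s‖ ^ 2) t := by
    intro t
    have := ((hf (v + t • s)).hasDerivAt_comp_add_smul.sub
      ((hasDerivAt_id t).mul_const ⟪g v, s⟫)).sub
      (((hasDerivAt_pow 2 t).const_mul (L / 2)).mul_const (‖s‖ ^ 2))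
    refine this.congr_deriv ?_
    rw [inner_sub_left]; push_cast; ring
  have hψ' : ∀ t, 0 ≤ t → ⟪g (v + t • s) - g v, s⟫ - L * t * ‖s‖ ^ 2 ≤ 0 := by
    intro t ht
    rw [sub_nonpos]
    calc ⟪g (v + t • s) - g v, s⟫ ≤ ‖g (v + t • s) - g v‖ * ‖s‖ := real_inner_le_norm _ _
      _ ≤ L * ‖(v + t • s) - v‖ * ‖s‖ := by gcongr; exact hg _ _
      _ = L * t * ‖s‖ ^ 2 := by
        rw [add_sub_cancel_left, norm_smul, Real.norm_of_nonneg ht]; ring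
  have hanti : AntitoneOn ψ (Set.Ici 0) :=
    antitoneOn_of_hasDerivWithinAt_nonpos (convex_Ici 0)
      (fun t _ => (hψ t).continuousAt.continuousWithinAt)
      (fun t _ => (hψ t).hasDerivWithinAt)
      (fun t ht => hψ' t (interior_subset ht))
  have h01 : ψ 1 ≤ ψ 0 := hanti Set.self_mem_Ici (Set.mem_Ici.mpr zero_le_one) zero_le_one
  simp only [ψ, one_smul, zero_smul, add_zero, one_mul, one_pow, zero_mul, sub_zero, mul_one,
    ne_eq, OfNat.ofNat_ne_zero, not_false_eq_true, zero_pow, mul_zero] at h01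
  linarith

end Descent

section LeastSquares

variable {E F : Type*} [NormedAddCommGroup E] [InnerProductSpace ℝ E] [CompleteSpace E]
  [NormedAddCommGroup F] [InnerProductSpace ℝ F] [CompleteSpace F]

theorem HasFDerivAt.hasGradientAt_half_norm_sq {r : E → F} {J : E →L[ℝ] F} {x : E}
    (hr : HasFDerivAt r J x) :
    HasGradientAt (fun y => 1 / 2 * ‖r y‖ ^ 2) (ContinuousLinearMap.adjoint J (r x)) x := by
  rw [hasGradientAt_iff_hasFDerivAt]
  refine (hr.norm_sq.const_mul (1 / 2 : ℝ)).congr_fderiv ?_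
  ext u
  simp [ContinuousLinearMap.adjoint_inner_left]

variable (J : E →L[ℝ] F) {b : F} {γ : ℝ} {s : E}

theorem inner_adjoint_eq_of_regularised_step
    (hstep : ContinuousLinearMap.adjoint J (J s) + γ • s = -ContinuousLinearMap.adjoint J b) :
    ⟪ContinuousLinearMap.adjoint J b, s⟫ = -(‖J s‖ ^ 2 + γ * ‖s‖ ^ 2) := by
  have h := congrArg (⟪·, s⟫) hstep
  simp only [inner_add_left, inner_smul_left, inner_neg_left,
    ContinuousLinearMap.adjoint_inner_left, real_inner_self_eq_norm_sq, conj_trivial] at h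
  rw [ContinuousLinearMap.adjoint_inner_left]
  linarith

theorem half_norm_sq_sub_regularised_model_eq
    (hstep : ContinuousLinearMap.adjoint J (J s) + γ • s = -ContinuousLinearMap.adjoint J b) :
    1 / 2 * ‖b‖ ^ 2 - (1 / 2 * ‖J s + b‖ ^ 2 + γ / 2 * ‖s‖ ^ 2)
      = 1 / 2 * ‖J s‖ ^ 2 + γ / 2 * ‖s‖ ^ 2 := by
  have h := inner_adjoint_eq_of_regularised_step J hstep
  rw [ContinuousLinearMap.adjoint_inner_left] at h
  rw [norm_add_sq_real, real_inner_comm, h]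
  ring

end LeastSquares

theorem hasGradientAt_nlsObj {n m : ℕ}
    {r : EuclideanSpace ℝ (Fin n) → EuclideanSpace ℝ (Fin m)} (hr : Differentiable ℝ r)
    (w : EuclideanSpace ℝ (Fin n)) : HasGradientAt (nlsObj r) (nlsGrad r w) w :=
  (hr w).hasFDerivAt.hasGradientAt_half_norm_sq

theorem regularisation_large_gamma_very_successful_general
    {n m : ℕ}
    (r : EuclideanSpace ℝ (Fin n) → EuclideanSpace ℝ (Fin m))
    (hr : ContDiff ℝ 1 r)
    -- ∇𝒥 is Lipschitz continuous with constant L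
    (L : ℝ) (hL : 0 < L)
    (hlip : ∀ v w, ‖nlsGrad r v - nlsGrad r w‖ ≤ L * ‖v - w‖)
    (v : EuclideanSpace ℝ (Fin n)) (hgrad : nlsGrad r v ≠ 0)
    (η₂ : ℝ) (hη₂ : η₂ ∈ Set.Ioo (0 : ℝ) 1)
    (γ : ℝ) (hγ : L / (2 - η₂) ≤ γ)
    (s : EuclideanSpace ℝ (Fin n))
    (hstep : ContinuousLinearMap.adjoint (nlsJ r v) (nlsJ r v s) + γ • s =
      -ContinuousLinearMap.adjoint (nlsJ r v) (r v))
    -- the local model m(s) = (1/2)‖J(v)s + r(v)‖² + (γ/2)‖s‖²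
    (mdl : EuclideanSpace ℝ (Fin n) → ℝ)
    (hmdl : ∀ sv, mdl sv = (1 / 2) * ‖nlsJ r v sv + r v‖ ^ 2 + (γ / 2) * ‖sv‖ ^ 2) :
    0 < nlsObj r v - mdl s ∧
    η₂ ≤ (nlsObj r v - nlsObj r (v + s)) / (nlsObj r v - mdl s) := by
  obtain ⟨-, hη₁⟩ := hη₂
  have hγL : L ≤ γ * (2 - η₂) := (div_le_iff₀ (by linarith)).mp hγ
  have hγpos : 0 < γ := (div_pos hL (by linarith)).trans_le hγ
  have hs : s ≠ 0 := by
    rintro rfl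
    exact hgrad (by simpa [nlsGrad] using hstep.symm)
  have hinner : ⟪nlsGrad r v, s⟫ = -(‖nlsJ r v s‖ ^ 2 + γ * ‖s‖ ^ 2) :=
    inner_adjoint_eq_of_regularised_step _ hstep
  have hpred : nlsObj r v - mdl s = 1 / 2 * ‖nlsJ r v s‖ ^ 2 + γ / 2 * ‖s‖ ^ 2 := by
    rw [hmdl, nlsObj]
    exact half_norm_sq_sub_regularised_model_eq _ hstep
  have hpos : 0 < nlsObj r v - mdl s := by
    rw [hpred]
    positivity
  have hdesc := le_add_inner_add_of_lipschitz_gradient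
    (hasGradientAt_nlsObj (hr.differentiable one_ne_zero)) hlip v s
  refine ⟨hpos, (le_div_iff₀ hpos).mpr ?_⟩
  rw [hpred]
  nlinarith [mul_nonneg (sub_nonneg.mpr hγL) (sq_nonneg ‖s‖),
    mul_nonneg (by linarith : (0 : ℝ) ≤ 2 - η₂) (sq_nonneg ‖nlsJ r v s‖)]

/-- Sufficiently large regularisation guarantees a very successful iteration:
if `∇𝒥` is `L`-Lipschitz, `∇𝒥(v) ≠ 0` and `γ ≥ L/(2 − η₂)` then the predicted
decrease is positive and `ρ ≥ η₂`. -/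
theorem regularisation_large_gamma_very_successful
    {n m : ℕ} (hn : 0 < n) (hm : 0 < m)
    (r : EuclideanSpace ℝ (Fin n) → EuclideanSpace ℝ (Fin m))
    (hr : ContDiff ℝ 1 r)
    -- ∇𝒥 is Lipschitz continuous with constant L
    (L : ℝ) (hL : 0 < L)
    (hlip : ∀ v w, ‖nlsGrad r v - nlsGrad r w‖ ≤ L * ‖v - w‖)
    (v : EuclideanSpace ℝ (Fin n)) (hgrad : nlsGrad r v ≠ 0)
    (η₂ : ℝ) (hη₂ : η₂ ∈ Set.Ioo (0 : ℝ) 1)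
    (γ : ℝ) (hγ : L / (2 - η₂) ≤ γ)
    (s : EuclideanSpace ℝ (Fin n))
    (hstep : ContinuousLinearMap.adjoint (nlsJ r v) (nlsJ r v s) + γ • s =
      -ContinuousLinearMap.adjoint (nlsJ r v) (r v))
    -- the local model m(s) = (1/2)‖J(v)s + r(v)‖² + (γ/2)‖s‖²
    (mdl : EuclideanSpace ℝ (Fin n) → ℝ)
    (hmdl : ∀ sv, mdl sv = (1 / 2) * ‖nlsJ r v sv + r v‖ ^ 2 + (γ / 2) * ‖sv‖ ^ 2) :
    0 < nlsObj r v - mdl s ∧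
    η₂ ≤ (nlsObj r v - nlsObj r (v + s)) / (nlsObj r v - mdl s) :=
  regularisation_large_gamma_very_successful_general r hr L hL hlip v hgrad η₂ hη₂ γ hγ s hstep mdl
    hmdl
end
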